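/- Let n ≥ 1 and ω* ≥ 1 be integers, and let n_s divide n with n_s ≥ 2ω*−1. Fix r_0 ∈ {0,…,n−1} and set r_i = (r_0 + i·(n/n_s)) mod n for i = 0,…,n_s−1 (n_s equally spaced sample points). Then for every x ∈ S_{ω*} one has Σ_{i=0}^{n_s−1} x_{r_i}² = (n_s/n)·Σ_{j=0}^{n−1} x_j². Consequently, for any x¹, x² ∈ S_{ω*} with x² ≠ 0, the ratio ‖x¹‖₂/‖x²‖₂ equals the ratio of the Euclidean norms of the corresponding sampled vectors (x¹_{r_0},…,x¹_{r_{n_s−1}}) and (x²_{r_0},…,x²_{r_{n_s−1}}). -/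

import Mathlib

/-!
Write `x_j = n⁻¹ ∑ₖ x̂_k ζ^{jk}` for a primitive `n`-th root of unity `ζ`. Then `x_j²` is a
combination of the characters `j ↦ ζ^{j(k+k')}` with `x̂_k x̂_{k'} ≠ 0`, i.e. with `k, k' ∈ K_ω`.
Averaged over the `n_s` equispaced samples such a character gives `ζ^{r₀ s}·[n_s ∣ s]`
(`s = k + k'`), averaged over all of `Fin n` it gives `[n ∣ s]`. Every `k ∈ K_ω` is congruent
mod `n` to some `e` with `|e| ≤ ω - 1`, so `k + k'` lies within `2ω - 2 < n_s` of a multiple of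
`n`, and `n_s ∣ k + k'` already forces `n ∣ k + k'`. Hence both averages agree on every character
occurring in `x²`, which is the energy identity; the norm ratio follows by taking square roots.
-/

open scoped BigOperators

noncomputable section

/-- Low-frequency index set `K_ω ⊆ {0,…,n−1}`. -/
def Kset (n ω : ℕ) : Set (Fin n) := {k | (k : ℕ) ≤ ω - 1 ∨ n - ω + 1 ≤ (k : ℕ)}

/-- The set of ω-bandlimited real vectors `S_ω`. -/
def Sband (n ω : ℕ) : Set (EuclideanSpace ℝ (Fin n)) :=
  {x | ∀ k : Fin n, k ∉ Kset n ω →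
    ∑ j : Fin n, (x j : ℂ) *
      Complex.exp (-(2 * (Real.pi : ℂ) * Complex.I * ((j : ℕ) : ℂ) * ((k : ℕ) : ℂ)) / (n : ℂ)) = 0}

open Finset

def dft {K : Type*} [Field K] {n : ℕ} (ζ : K) (x : Fin n → K) (k : Fin n) : K :=
  ∑ j, x j * ζ ^ (-((j : ℤ) * k))

namespace IsPrimitiveRoot

variable {K : Type*} [Field K] {n : ℕ} {ζ : K}

theorem sum_zpow_mul (hζ : IsPrimitiveRoot ζ n) (s : ℤ) :
    ∑ j : Fin n, ζ ^ ((j : ℤ) * s) = if (n : ℤ) ∣ s then (n : K) else 0 := by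
  have hpow : ∀ j : ℕ, ζ ^ ((j : ℤ) * s) = (ζ ^ s) ^ j := fun j => by
    rw [mul_comm, zpow_mul, zpow_natCast]
  simp_rw [hpow]
  rw [Fin.sum_univ_eq_sum_range (fun j => (ζ ^ s) ^ j) n]
  split_ifs with hs
  · simp [(hζ.zpow_eq_one_iff_dvd s).mpr hs]
  · have hroot : (ζ ^ s) ^ n = 1 := by
      rw [← zpow_natCast, ← zpow_mul, mul_comm, zpow_mul, zpow_natCast, hζ.pow_eq_one, one_zpow]
    rw [geom_sum_eq (mt (hζ.zpow_eq_one_iff_dvd s).mp hs), hroot, sub_self, zero_div]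

theorem dft_inversion [NeZero n] (hζ : IsPrimitiveRoot ζ n) (x : Fin n → K) (j : Fin n) :
    x j = (n : K)⁻¹ * ∑ k, dft ζ x k * ζ ^ ((j : ℤ) * k) := by
  have hζ0 : ζ ≠ 0 := hζ.ne_zero (NeZero.ne n)
  have horth : ∀ l : Fin n, ∑ k : Fin n, ζ ^ (-((l : ℤ) * k)) * ζ ^ ((j : ℤ) * k)
      = if l = j then (n : K) else 0 := fun l => by
    simp_rw [← zpow_add₀ hζ0, show ∀ k : ℤ, -((l : ℤ) * k) + j * k = k * (j - l) from
      fun k => by ring, hζ.sum_zpow_mul]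
    refine if_congr ⟨fun h => ?_, fun h => h ▸ by simp⟩ rfl rfl
    have := Int.eq_zero_of_abs_lt_dvd h (abs_sub_lt_iff.mpr ⟨by omega, by omega⟩)
    exact Fin.ext (by omega)
  simp_rw [dft, sum_mul, mul_assoc]
  rw [sum_comm]
  simp_rw [← mul_sum, horth, mul_ite, mul_zero, sum_ite_eq', mem_univ, if_true]
  rw [mul_comm, mul_inv_cancel_right₀ hζ.neZero'.out]

theorem sum_sample_zpow_mul [NeZero n] (hζ : IsPrimitiveRoot ζ n) {N : ℕ} (hN : N ∣ n)
    (r0 : ℕ) (r : Fin N → Fin n) (hr : ∀ i : Fin N, (r i : ℕ) = (r0 + (i : ℕ) * (n / N)) % n)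
    (s : ℤ) :
    ∑ i, ζ ^ ((r i : ℤ) * s) = ζ ^ ((r0 : ℤ) * s) * if (N : ℤ) ∣ s then (N : K) else 0 := by
  have hn := NeZero.ne n
  have hζ0 : ζ ≠ 0 := hζ.ne_zero hn
  have hstep : IsPrimitiveRoot (ζ ^ (n / N)) N := by
    have hm : n / N ≠ 0 := Nat.div_ne_zero_iff_of_dvd hN |>.mpr ⟨hn, ne_zero_of_dvd_ne_zero hn hN⟩
    simpa [Nat.div_div_self hN hn] using hζ.pow_of_dvd hm (Nat.div_dvd_of_dvd hN)
  have hterm : ∀ i : Fin N,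
      ζ ^ ((r i : ℤ) * s) = ζ ^ ((r0 : ℤ) * s) * (ζ ^ (n / N)) ^ ((i : ℤ) * s) := fun i => by
    obtain ⟨q, hq⟩ : ∃ q : ℕ, r0 + (i : ℕ) * (n / N) = n * q + r i :=
      ⟨_, (hr i ▸ Nat.div_add_mod _ n).symm⟩
    have hmod : ζ ^ ((r i : ℤ) * s) = ζ ^ (((r0 + (i : ℕ) * (n / N) : ℕ) : ℤ) * s) := by
      rw [hq]
      push_cast
      rw [add_mul, zpow_add₀ hζ0, mul_assoc, zpow_mul ζ n, zpow_natCast, hζ.pow_eq_one, one_zpow,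
        one_mul]
    rw [hmod, ← zpow_natCast, ← zpow_mul, ← zpow_add₀ hζ0]
    congr 1
    push_cast
    ring
  rw [sum_congr rfl fun i _ => hterm i, ← mul_sum, hstep.sum_zpow_mul]

theorem sum_sample_zpow_mul_eq [NeZero n] (hζ : IsPrimitiveRoot ζ n) {N : ℕ} (hN : N ∣ n)
    (r0 : ℕ) (r : Fin N → Fin n) (hr : ∀ i : Fin N, (r i : ℕ) = (r0 + (i : ℕ) * (n / N)) % n)
    {s : ℤ} (hs : (N : ℤ) ∣ s → (n : ℤ) ∣ s) :
    ∑ i, ζ ^ ((r i : ℤ) * s) = (N / n : K) * ∑ j : Fin n, ζ ^ ((j : ℤ) * s) := by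
  rw [hζ.sum_sample_zpow_mul hN r0 r hr, hζ.sum_zpow_mul]
  by_cases hns : (n : ℤ) ∣ s
  · have hone : ζ ^ ((r0 : ℤ) * s) = 1 := by
      rw [mul_comm, zpow_mul, (hζ.zpow_eq_one_iff_dvd s).mpr hns, one_zpow]
    rw [if_pos ((Int.natCast_dvd_natCast.mpr hN).trans hns), if_pos hns, hone,
      div_mul_cancel₀ _ hζ.neZero'.out, one_mul]
  · rw [if_neg (mt hs hns), if_neg hns, mul_zero, mul_zero]

theorem sum_sq_comp_eq_sum_dft [NeZero n] (hζ : IsPrimitiveRoot ζ n) (x : Fin n → K)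
    {ι : Type*} [Fintype ι] (f : ι → Fin n) :
    ∑ i, x (f i) ^ 2 = (n : K)⁻¹ ^ 2 *
      ∑ k, ∑ k', dft ζ x k * dft ζ x k' * ∑ i, ζ ^ ((f i : ℤ) * ((k : ℤ) + k')) := by
  have hζ0 : ζ ≠ 0 := hζ.ne_zero (NeZero.ne n)
  have hsq : ∀ j, x j ^ 2 = (n : K)⁻¹ ^ 2 *
      ∑ k, ∑ k', dft ζ x k * dft ζ x k' * ζ ^ ((j : ℤ) * ((k : ℤ) + k')) := fun j => by
    simp_rw [hζ.dft_inversion x j, mul_pow, sq (∑ k, _), sum_mul_sum, mul_mul_mul_comm,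
      ← zpow_add₀ hζ0, ← mul_add]
  rw [sum_congr rfl fun i _ => hsq (f i), ← mul_sum, sum_comm]
  congr 1
  refine sum_congr rfl fun k _ => ?_
  rw [sum_comm]
  simp_rw [mul_sum]

theorem sum_sample_sq_eq [NeZero n] (hζ : IsPrimitiveRoot ζ n) {N : ℕ} (hN : N ∣ n)
    (r0 : ℕ) (r : Fin N → Fin n) (hr : ∀ i : Fin N, (r i : ℕ) = (r0 + (i : ℕ) * (n / N)) % n)
    (S : Set (Fin n)) (hS : ∀ k ∈ S, ∀ k' ∈ S, (N : ℤ) ∣ k + k' → (n : ℤ) ∣ k + k')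
    (x : Fin n → K) (hx : ∀ k ∉ S, dft ζ x k = 0) :
    ∑ i, x (r i) ^ 2 = (N / n : K) * ∑ j, x j ^ 2 := by
  have hpair : ∀ k k' : Fin n, dft ζ x k * dft ζ x k' * ∑ i, ζ ^ ((r i : ℤ) * ((k : ℤ) + k'))
      = (N / n : K) * (dft ζ x k * dft ζ x k' * ∑ j : Fin n, ζ ^ ((j : ℤ) * ((k : ℤ) + k'))) := by
    intro k k'
    by_cases hk : k ∈ S
    · by_cases hk' : k' ∈ S
      · rw [hζ.sum_sample_zpow_mul_eq hN r0 r hr (hS k hk k' hk')]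
        ring
      · simp [hx k' hk']
    · simp [hx k hk]
  have hfull := hζ.sum_sq_comp_eq_sum_dft x id
  simp only [id] at hfull
  rw [hζ.sum_sq_comp_eq_sum_dft x r, hfull]
  simp_rw [hpair, ← mul_sum]
  ring

end IsPrimitiveRoot

theorem exists_natAbs_le_of_mem_Kset {n ω : ℕ} {k : Fin n} (hk : k ∈ Kset n ω) :
    ∃ e : ℤ, e.natAbs ≤ ω - 1 ∧ (n : ℤ) ∣ k - e := by
  have := k.isLt
  rcases hk with h | h
  · exact ⟨k, by omega, by simp⟩
  · exact ⟨(k : ℤ) - n, by omega, by simp⟩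

theorem natCast_dvd_add_of_mem_Kset {n ω N : ℕ} (hN : N ∣ n) (hω : 2 * ω - 1 ≤ N) {k k' : Fin n}
    (hk : k ∈ Kset n ω) (hk' : k' ∈ Kset n ω) (h : (N : ℤ) ∣ k + k') : (n : ℤ) ∣ k + k' := by
  obtain ⟨e, he, hke⟩ := exists_natAbs_le_of_mem_Kset hk
  obtain ⟨e', he', hke'⟩ := exists_natAbs_le_of_mem_Kset hk'
  have hsum : (n : ℤ) ∣ ((k : ℤ) + k') - (e + e') := by
    simpa only [sub_add_sub_comm] using dvd_add hke hke'
  have hNe : (N : ℤ) ∣ e + e' := by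
    simpa only [sub_sub_cancel] using dvd_sub h ((Int.natCast_dvd_natCast.mpr hN).trans hsum)
  have he0 : e + e' = 0 := by
    by_contra hne
    have := Int.natAbs_le_of_dvd_ne_zero hNe hne
    have := Int.natAbs_add_le e e'
    omega
  simpa [he0] using hsum

theorem dft_exp_eq_zero_of_mem_Sband {n ω : ℕ} {x : EuclideanSpace ℝ (Fin n)}
    (hx : x ∈ Sband n ω) {k : Fin n} (hk : k ∉ Kset n ω) :
    dft (Complex.exp (2 * Real.pi * Complex.I / n)) (fun j => (x j : ℂ)) k = 0 := by
  rw [← hx k hk]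
  refine sum_congr rfl fun j _ => ?_
  rw [← Complex.exp_int_mul]
  congr 2
  push_cast
  ring

theorem EuclideanSpace.norm_equiv_symm_comp_eq {ι κ : Type*} [Fintype ι] [Fintype κ]
    (x : EuclideanSpace ℝ ι) (f : κ → ι) {c : ℝ} (h : ∑ i, x (f i) ^ 2 = c * ∑ j, x j ^ 2) :
    ‖(WithLp.equiv 2 (κ → ℝ)).symm (fun i => x (f i))‖ = √c * ‖x‖ := by
  simp only [EuclideanSpace.norm_eq, WithLp.equiv_symm_apply, Real.norm_eq_abs, sq_abs]
  rw [h, Real.sqrt_mul' c (by positivity)]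

theorem equispaced_sampling_energy_and_norm_ratio_general
    (n ωs ns : ℕ) (hn : 1 ≤ n) (hdvd : ns ∣ n) (hns : 2 * ωs - 1 ≤ ns)
    (r0 : ℕ) (r : Fin ns → Fin n)
    (hr : ∀ i : Fin ns, (r i : ℕ) = (r0 + (i : ℕ) * (n / ns)) % n) :
    (∀ x ∈ Sband n ωs,
      ∑ i : Fin ns, (x (r i)) ^ 2 = ((ns : ℝ) / (n : ℝ)) * ∑ j : Fin n, (x j) ^ 2) ∧
    (∀ x₁ ∈ Sband n ωs, ∀ x₂ ∈ Sband n ωs, x₂ ≠ 0 →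
      ‖x₁‖ / ‖x₂‖ =
        ‖(WithLp.equiv 2 (Fin ns → ℝ)).symm (fun i => x₁ (r i))‖ /
        ‖(WithLp.equiv 2 (Fin ns → ℝ)).symm (fun i => x₂ (r i))‖) := by
  have : NeZero n := ⟨by omega⟩
  have hζ := Complex.isPrimitiveRoot_exp n (NeZero.ne n)
  have henergy : ∀ x ∈ Sband n ωs,
      ∑ i, x (r i) ^ 2 = ((ns : ℝ) / n) * ∑ j, x j ^ 2 := fun x hx => by
    apply Complex.ofReal_injective
    push_cast
    exact hζ.sum_sample_sq_eq hdvd r0 r hr (Kset n ωs)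
      (fun k hk k' hk' => natCast_dvd_add_of_mem_Kset hdvd hns hk hk') _
      (fun k hk => dft_exp_eq_zero_of_mem_Sband hx hk)
  have hns0 : 0 < ns := Nat.pos_of_dvd_of_pos hdvd hn
  refine ⟨henergy, fun x₁ hx₁ x₂ hx₂ _ => ?_⟩
  rw [EuclideanSpace.norm_equiv_symm_comp_eq x₁ r (henergy x₁ hx₁),
    EuclideanSpace.norm_equiv_symm_comp_eq x₂ r (henergy x₂ hx₂),
    mul_div_mul_left _ _ (by positivity)]

/-- for `n_s ∣ n`, `n_s ≥ 2ω*−1` equally spaced sample points,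
sampling preserves energy up to the factor `n_s/n`, and hence preserves norm ratios of
bandlimited vectors. -/
theorem equispaced_sampling_energy_and_norm_ratio
    (n ωs ns : ℕ) (hn : 1 ≤ n) (hω : 1 ≤ ωs) (hdvd : ns ∣ n) (hns : 2 * ωs - 1 ≤ ns)
    (r0 : ℕ) (hr0 : r0 < n) (r : Fin ns → Fin n)
    (hr : ∀ i : Fin ns, (r i : ℕ) = (r0 + (i : ℕ) * (n / ns)) % n) :
    (∀ x ∈ Sband n ωs,
      ∑ i : Fin ns, (x (r i)) ^ 2 = ((ns : ℝ) / (n : ℝ)) * ∑ j : Fin n, (x j) ^ 2) ∧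
    (∀ x₁ ∈ Sband n ωs, ∀ x₂ ∈ Sband n ωs, x₂ ≠ 0 →
      ‖x₁‖ / ‖x₂‖ =
        ‖(WithLp.equiv 2 (Fin ns → ℝ)).symm (fun i => x₁ (r i))‖ /
        ‖(WithLp.equiv 2 (Fin ns → ℝ)).symm (fun i => x₂ (r i))‖) :=
  equispaced_sampling_energy_and_norm_ratio_general n ωs ns hn hdvd hns r0 r hr
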